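/- Let n, p ∈ ℕ, X̃ ∈ ℝ^{n×p}, Ỹ ∈ ℝ^n, λ₁ ≥ 0, λ₂ > 0, and let β̂ ∈ ℝ^p be a global minimizer of the Elastic Net objective L(β) = Σ_{i=1}^n (Ỹ_i − Σ_{j=1}^p β_j X̃_{ij})² + λ₂ Σ_{j=1}^p β_j² + λ₁ Σ_{j=1}^p |β_j|. Fix indices k, l with β̂_k · β̂_l > 0. Then, with r̂_i = Ỹ_i − Σ_{j=1}^p β̂_j X̃_{ij}, the identity β̂_k − β̂_l = (1/λ₂) Σ_{i=1}^n (X̃_{ik} − X̃_{il}) r̂_i holds. -/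

import Mathlib

/-!
Move `β̂` along the direction `v = eₖ - eₗ`. Because `β̂ₖ` and `β̂ₗ` are nonzero, no coordinate of
`β̂ + t v` changes sign for small `|t|`, so there the `λ₁`-term of the objective is affine in `t`,
with slope `λ₁ (sign β̂ₖ - sign β̂ₗ) = 0`. The objective restricted to the line is therefore
differentiable at the minimum `t = 0`, and its vanishing derivative
`-2 ∑ᵢ (X̃ᵢₖ - X̃ᵢₗ) r̂ᵢ + 2 λ₂ (β̂ₖ - β̂ₗ)` is the identity.
-/

open Finset

/-- The Elastic Net objective
`L(β) = ∑ᵢ (Ỹᵢ − ∑ⱼ βⱼ X̃ᵢⱼ)² + λ₂ ∑ⱼ βⱼ² + λ₁ ∑ⱼ |βⱼ|`. -/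
noncomputable def enetObj {n p : ℕ} (Xt : Fin n → Fin p → ℝ) (Yt : Fin n → ℝ)
    (lam1 lam2 : ℝ) (β : Fin p → ℝ) : ℝ :=
  ∑ i, (Yt i - ∑ j, β j * Xt i j) ^ 2 + lam2 * ∑ j, (β j) ^ 2 + lam1 * ∑ j, |β j|

open Filter Topology

lemma sign_eq_sign_of_mul_pos {x y : ℝ} (h : 0 < x * y) : SignType.sign x = SignType.sign y := by
  rcases mul_pos_iff.mp h with ⟨hx, hy⟩ | ⟨hx, hy⟩
  · rw [sign_pos hx, sign_pos hy]
  · rw [sign_neg hx, sign_neg hy]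

section Line

variable {ι κ : Type*} [Fintype ι] [Fintype κ]

lemma sum_single_sub_single_mul [DecidableEq ι] (k l : ι) (a : ι → ℝ) :
    ∑ j, (Pi.single k 1 - Pi.single l 1 : ι → ℝ) j * a j = a k - a l := by
  simp [sub_mul, sum_sub_distrib, Pi.single_apply]

lemma eventually_sum_abs_add_mul (β v : ι → ℝ) (hv : ∀ j, β j = 0 → v j = 0) :
    ∀ᶠ t in 𝓝 (0 : ℝ),
      ∑ j, |β j + t * v j| = ∑ j, |β j| + t * ∑ j, v j * SignType.sign (β j) := by
  have hsign : ∀ᶠ t in 𝓝 (0 : ℝ),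
      ∀ j, |β j + t * v j| = SignType.sign (β j) * (β j + t * v j) := by
    refine eventually_all.mpr fun j => ?_
    by_cases hβ : β j = 0
    · simp [hβ, hv j hβ]
    have hcont : Continuous fun t : ℝ => (β j + t * v j) * β j := by fun_prop
    have hpos : ∀ᶠ t in 𝓝 (0 : ℝ), 0 < (β j + t * v j) * β j :=
      hcont.continuousAt.eventually (lt_mem_nhds (by simpa using mul_self_pos.mpr hβ))
    filter_upwards [hpos] with t ht
    rw [← sign_mul_self, sign_eq_sign_of_mul_pos ht]
  filter_upwards [hsign] with t ht
  simp only [ht, ← sign_mul_self (β _), mul_add, sum_add_distrib, mul_sum]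
  congr 1
  exact sum_congr rfl fun j _ => by ring

lemma hasDerivAt_sum_sq_add_mul (β v : ι → ℝ) :
    HasDerivAt (fun t => ∑ j, (β j + t * v j) ^ 2) (2 * ∑ j, v j * β j) 0 := by
  refine (HasDerivAt.fun_sum (u := univ) fun j _ =>
    ((((hasDerivAt_id' (0 : ℝ)).mul_const (v j)).const_add (β j)).fun_pow 2)).congr_deriv ?_
  simp only [zero_mul, add_zero, one_mul, Nat.add_one_sub_one, pow_one, Nat.cast_ofNat, mul_sum]
  exact sum_congr rfl fun j _ => by ring

lemma hasDerivAt_sum_sq_residual (X : κ → ι → ℝ) (Y : κ → ℝ) (β v : ι → ℝ) :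
    HasDerivAt (fun t => ∑ i, (Y i - ∑ j, (β j + t * v j) * X i j) ^ 2)
      (-2 * ∑ i, (∑ j, v j * X i j) * (Y i - ∑ j, β j * X i j)) 0 := by
  refine (HasDerivAt.fun_sum (u := univ) fun i _ =>
    ((HasDerivAt.fun_sum (u := univ) fun j _ =>
      (((hasDerivAt_id' (0 : ℝ)).mul_const (v j)).const_add (β j)).mul_const (X i j)).const_sub
        (Y i)).fun_pow 2).congr_deriv ?_
  simp only [zero_mul, add_zero, one_mul, Nat.add_one_sub_one, pow_one, Nat.cast_ofNat, mul_sum]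
  exact sum_congr rfl fun i _ => by ring

end Line

lemma enetObj_stationary_of_isLocalMin {n p : ℕ} (Xt : Fin n → Fin p → ℝ) (Yt : Fin n → ℝ)
    (lam1 lam2 : ℝ) (βh : Fin p → ℝ) (hmin : IsLocalMin (enetObj Xt Yt lam1 lam2) βh)
    (v : Fin p → ℝ) (hv : ∀ j, βh j = 0 → v j = 0) :
    2 * ∑ i, (∑ j, v j * Xt i j) * (Yt i - ∑ j, βh j * Xt i j) =
      lam2 * (2 * ∑ j, v j * βh j) + lam1 * ∑ j, v j * SignType.sign (βh j) := by
  have hline : IsLocalMin (fun t : ℝ => enetObj Xt Yt lam1 lam2 (βh + t • v)) 0 :=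
    IsLocalMin.comp_continuous (f := enetObj Xt Yt lam1 lam2) (g := fun t : ℝ => βh + t • v)
      (by simpa using hmin) (by fun_prop)
  have hsmooth : (fun t : ℝ => enetObj Xt Yt lam1 lam2 (βh + t • v)) =ᶠ[𝓝 0] fun t =>
      ∑ i, (Yt i - ∑ j, (βh j + t * v j) * Xt i j) ^ 2 + lam2 * ∑ j, (βh j + t * v j) ^ 2 +
        lam1 * (∑ j, |βh j| + t * ∑ j, v j * SignType.sign (βh j)) := by
    filter_upwards [eventually_sum_abs_add_mul βh v hv] with t ht
    simp only [enetObj, Pi.add_apply, Pi.smul_apply, smul_eq_mul, ht]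
  have hderiv := ((hasDerivAt_sum_sq_residual Xt Yt βh v).add
    ((hasDerivAt_sum_sq_add_mul βh v).const_mul lam2)).add
    (((hasDerivAt_id' (0 : ℝ)).mul_const (∑ j, v j * SignType.sign (βh j))).const_add
      (∑ j, |βh j|) |>.const_mul lam1)
  linarith [(hline.congr hsmooth).hasDerivAt_eq_zero hderiv]

theorem elasticNet_coeff_difference_identity_general {n p : ℕ}
    (Xt : Fin n → Fin p → ℝ) (Yt : Fin n → ℝ)
    (lam1 lam2 : ℝ) (hlam2 : 0 < lam2)
    (βh : Fin p → ℝ)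
    (hmin : ∀ β, enetObj Xt Yt lam1 lam2 βh ≤ enetObj Xt Yt lam1 lam2 β)
    (k l : Fin p) (hsign : βh k * βh l > 0) :
    βh k - βh l =
      (1 / lam2) * ∑ i, (Xt i k - Xt i l) * (Yt i - ∑ j, βh j * Xt i j) := by
  have hk : βh k ≠ 0 := left_ne_zero_of_mul hsign.ne'
  have hl : βh l ≠ 0 := right_ne_zero_of_mul hsign.ne'
  have hsupp : ∀ j, βh j = 0 → (Pi.single k 1 - Pi.single l 1 : Fin p → ℝ) j = 0 := by
    intro j hj
    have hjk : j ≠ k := by rintro rfl; exact hk hj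
    have hjl : j ≠ l := by rintro rfl; exact hl hj
    simp [hjk, hjl]
  have hstat := enetObj_stationary_of_isLocalMin Xt Yt lam1 lam2 βh
    (Filter.Eventually.of_forall hmin) _ hsupp
  simp only [sum_single_sub_single_mul, sign_eq_sign_of_mul_pos hsign, sub_self, mul_zero,
    add_zero] at hstat
  field_simp
  linarith

/-- Subtracting the two first-order conditions cancels the `λ₁` sign terms:
`β̂ₖ − β̂ₗ = (1/λ₂) ∑ᵢ (X̃ᵢₖ − X̃ᵢₗ) r̂ᵢ`. -/
theorem elasticNet_coeff_difference_identity {n p : ℕ}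
    (Xt : Fin n → Fin p → ℝ) (Yt : Fin n → ℝ)
    (lam1 lam2 : ℝ) (hlam1 : 0 ≤ lam1) (hlam2 : 0 < lam2)
    (βh : Fin p → ℝ)
    (hmin : ∀ β, enetObj Xt Yt lam1 lam2 βh ≤ enetObj Xt Yt lam1 lam2 β)
    (k l : Fin p) (hsign : βh k * βh l > 0) :
    βh k - βh l =
      (1 / lam2) * ∑ i, (Xt i k - Xt i l) * (Yt i - ∑ j, βh j * Xt i j) :=
  elasticNet_coeff_difference_identity_general Xt Yt lam1 lam2 hlam2 βh hmin k l hsign
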